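/- A cirquent A is valid if and only if A is an instance of some valid circuit B. (Left to right: from a validating arrangement α for A, rename atoms so that two ports share an atom only when they are allocated to each other in α, obtaining a circuit B of which A is an instance and for which α remains validating. Right to left: validity is preserved under taking instances.) -/

import Mathlib

/-- A literal: an atom or a negated atom. -/
inductive CLit (A : Type) : Type
  | pos : A → CLit A
  | neg : A → CLit A

/-- A node label: a port labeled by a literal, a conjunctive gate, or a disjunctive gate. -/
inductive CLab (A : Type) : Type
  | port : CLit A → CLab A
  | gand : CLab A
  | gor : CLab A

/-- A cirquent: a finite DAG with a root that is an ancestor of all other nodes;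
ports (literal-labeled nodes) have no children. -/
structure Cirquent (A : Type) : Type 1 where
  Node : Type
  fintypeNode : Fintype Node
  children : Node → List Node
  label : Node → CLab A
  root : Node
  port_no_child : ∀ v l, label v = CLab.port l → children v = []
  acyclic : WellFounded (fun x y : Node => x ∈ children y)
  root_ancestor : ∀ v, v ≠ root → Relation.TransGen (fun x y : Node => x ∈ children y) v root

namespace Cirquent

variable {A : Type}

/-- Evaluation of each node under a truth assignment `f` to the nodes (only the values on
ports matter): a port takes its assigned value, a disjunctive gate is true iff some child
is true, a conjunctive gate is true iff all children are true. -/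
noncomputable def eval (C : Cirquent A) (f : C.Node → Bool) : C.Node → Bool :=
  C.acyclic.fix fun v ih =>
    match C.label v with
    | CLab.port _ => f v
    | CLab.gor => ((C.children v).attach.map fun c => ih c.1 c.2).any id
    | CLab.gand => ((C.children v).attach.map fun c => ih c.1 c.2).all id

/-- The truth value of the cirquent: the value of its root. -/
noncomputable def value (C : Cirquent A) (f : C.Node → Bool) : Bool := C.eval f C.root

def IsPort (C : Cirquent A) (v : C.Node) : Prop := ∃ l, C.label v = CLab.port l

/-- Two ports have opposite labels: `P` and `¬P` for the same atom `P`. -/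
def Opposite (C : Cirquent A) (a b : C.Node) : Prop :=
  ∃ p, (C.label a = CLab.port (CLit.pos p) ∧ C.label b = CLab.port (CLit.neg p)) ∨
       (C.label a = CLab.port (CLit.neg p) ∧ C.label b = CLab.port (CLit.pos p))

/-- An arrangement: a set of (unordered, here represented as ordered) pairs of ports with
opposite labels, pairwise disjoint (the monogamicity condition). -/
def IsArrangement (C : Cirquent A) (α : Set (C.Node × C.Node)) : Prop :=
  (∀ p ∈ α, C.Opposite p.1 p.2) ∧
  ∀ p ∈ α, ∀ q ∈ α, p = q ∨ p = (q.2, q.1) ∨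
    ({p.1, p.2} ∩ ({q.1, q.2} : Set C.Node) = ∅)

/-- `f` is consistent with `α`: it assigns opposite values to the members of each allocation. -/
def Consistent (C : Cirquent A) (f : C.Node → Bool) (α : Set (C.Node × C.Node)) : Prop :=
  ∀ p ∈ α, f p.1 ≠ f p.2

/-- `α` is validating: it is an arrangement and the cirquent is true under every
consistent assignment. -/
def Validating (C : Cirquent A) (α : Set (C.Node × C.Node)) : Prop :=
  C.IsArrangement α ∧ ∀ f, C.Consistent f α → C.value f = true

/-- A cirquent is valid iff it has a validating arrangement. -/
def Valid (C : Cirquent A) : Prop := ∃ α, C.Validating α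

/-- A circuit: a cirquent all of whose ports have pairwise distinct labels. -/
def IsCircuit (C : Cirquent A) : Prop :=
  ∀ a b, C.IsPort a → C.IsPort b → a ≠ b → C.label a ≠ C.label b

end Cirquent

def CLit.rename {A B : Type} (σ : A → B) : CLit A → CLit B
  | .pos p => .pos (σ p)
  | .neg p => .neg (σ p)

def CLab.rename {A B : Type} (σ : A → B) : CLab A → CLab B
  | .port l => .port (l.rename σ)
  | .gand => .gand
  | .gor => .gor

/-- The instance of a cirquent obtained by renaming atoms via `σ`, applied uniformly to
all port labels (preserving negation); the underlying DAG is unchanged. -/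
def Cirquent.rename {A B : Type} (C : Cirquent A) (σ : A → B) : Cirquent B where
  Node := C.Node
  fintypeNode := C.fintypeNode
  children := C.children
  label := fun v => (C.label v).rename σ
  root := C.root
  port_no_child := by
    intro v l h
    cases hl : C.label v with
    | port l' => exact C.port_no_child v l' hl
    | gand => (try simp only at h); rw [hl] at h; simp [CLab.rename] at h
    | gor => (try simp only at h); rw [hl] at h; simp [CLab.rename] at h
  acyclic := C.acyclic
  root_ancestor := C.root_ancestor

/-! Given a validating arrangement `α`, tag the atom of every port with the allocation class
of that port (the port together with its `α`-partner). Two ports then share an atom only if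
they are allocated to each other, and allocated ports carry opposite literals, so the result is
a circuit; forgetting the tags gives back the original cirquent, and `α` still validates the
circuit because the tags change neither the opposite pairs of `α` nor the evaluation.
Conversely, renaming atoms keeps opposite ports opposite and does not affect evaluation, so
validating arrangements pass to instances. -/

namespace CLab

variable {A B C : Type}

theorem rename_rename (σ : A → B) (τ : B → C) (l : CLab A) :
    (l.rename σ).rename τ = l.rename (τ ∘ σ) := by
  rcases l with ⟨p | p⟩ | _ | _ <;> rfl

theorem rename_id (l : CLab A) : l.rename id = l := by
  rcases l with ⟨p | p⟩ | _ | _ <;> rfl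

theorem eq_of_rename_prodMk_eq {s t : B} {l l' : CLab A} {x : CLit (B × A)}
    (hx : l.rename (Prod.mk s) = .port x) (h : l.rename (Prod.mk s) = l'.rename (Prod.mk t)) :
    s = t ∧ l = l' := by
  rcases l with ⟨p | p⟩ | _ | _ <;> rcases l' with ⟨q | q⟩ | _ | _ <;>
    simp_all [rename, CLit.rename]

end CLab

namespace Cirquent

variable {A B : Type}

theorem eval_eq (C : Cirquent A) (f : C.Node → Bool) (v : C.Node) :
    C.eval f v = match C.label v with
      | CLab.port _ => f v
      | CLab.gor => ((C.children v).attach.map fun c => C.eval f c.1).any id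
      | CLab.gand => ((C.children v).attach.map fun c => C.eval f c.1).all id :=
  WellFounded.fix_eq _ _ _

theorem Opposite.symm {C : Cirquent A} {a b : C.Node} (h : C.Opposite a b) : C.Opposite b a := by
  obtain ⟨p, h | h⟩ := h
  exacts [⟨p, .inr h.symm⟩, ⟨p, .inl h.symm⟩]

theorem Opposite.label_ne {C : Cirquent A} {a b : C.Node} (h : C.Opposite a b) :
    C.label a ≠ C.label b := by
  obtain ⟨p, ⟨ha, hb⟩ | ⟨ha, hb⟩⟩ := h <;> simp [ha, hb]

def relabel (C : Cirquent A) (g : C.Node → A → B) : Cirquent B where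
  Node := C.Node
  fintypeNode := C.fintypeNode
  children := C.children
  label v := (C.label v).rename (g v)
  root := C.root
  port_no_child v l h := by
    rcases hl : C.label v with l' | _ | _
    · exact C.port_no_child v l' hl
    all_goals simp [hl, CLab.rename] at h
  acyclic := C.acyclic
  root_ancestor := C.root_ancestor

@[simp]
theorem label_relabel (C : Cirquent A) (g : C.Node → A → B) (v : C.Node) :
    (C.relabel g).label v = (C.label v).rename (g v) :=
  rfl

theorem rename_eq_relabel (C : Cirquent A) (σ : A → B) : C.rename σ = C.relabel fun _ => σ :=
  rfl

theorem relabel_rename (C : Cirquent A) (g : C.Node → A → B) (σ : B → A)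
    (hσ : ∀ v, σ ∘ g v = id) : (C.relabel g).rename σ = C := by
  have hlabel : (fun v => ((C.label v).rename (g v)).rename σ) = C.label := by
    funext v
    rw [CLab.rename_rename, hσ, CLab.rename_id]
  cases C
  simp only [rename, relabel] at hlabel ⊢
  congr 1

theorem eval_relabel (C : Cirquent A) (g : C.Node → A → B) (f : C.Node → Bool) (v : C.Node) :
    (C.relabel g).eval f v = C.eval f v := by
  induction v using C.acyclic.induction with
  | _ v ih =>
    have hchildren :
        ((C.children v).attach.map fun c => (C.relabel g).eval f c.1) =
          (C.children v).attach.map fun c => C.eval f c.1 :=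
      List.map_congr_left fun c _ => ih c.1 c.2
    rw [eval_eq (C.relabel g) f v, eval_eq C]
    simp only [label_relabel]
    rcases C.label v with l | _ | _
    · rfl
    · exact congrArg (List.all · id) hchildren
    · exact congrArg (List.any · id) hchildren

theorem Opposite.relabel {C : Cirquent A} {a b : C.Node} (h : C.Opposite a b)
    {g : C.Node → A → B} (hg : g a = g b) : (C.relabel g).Opposite a b := by
  obtain ⟨p, ⟨ha, hb⟩ | ⟨ha, hb⟩⟩ := h
  · exact ⟨g a p, .inl ⟨by simp [ha, CLab.rename, CLit.rename],
      by simp [hb, hg, CLab.rename, CLit.rename]⟩⟩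
  · exact ⟨g a p, .inr ⟨by simp [ha, CLab.rename, CLit.rename],
      by simp [hb, hg, CLab.rename, CLit.rename]⟩⟩

theorem Validating.relabel {C : Cirquent A} {α : Set (C.Node × C.Node)} (h : C.Validating α)
    {g : C.Node → A → B} (hg : ∀ p ∈ α, g p.1 = g p.2) : (C.relabel g).Validating α :=
  ⟨⟨fun p hp => (h.1.1 p hp).relabel (hg p hp), h.1.2⟩,
    fun f hf => (eval_relabel C g f C.root).trans (h.2 f hf)⟩

theorem Valid.rename {C : Cirquent A} (h : C.Valid) (σ : A → B) : (C.rename σ).Valid := by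
  obtain ⟨α, hα⟩ := h
  rw [rename_eq_relabel]
  exact ⟨α, hα.relabel fun _ _ => rfl⟩

def Allocated {N : Type} (α : Set (N × N)) (a b : N) : Prop := (a, b) ∈ α ∨ (b, a) ∈ α

theorem Allocated.symm {N : Type} {α : Set (N × N)} {a b : N} (h : Allocated α a b) :
    Allocated α b a :=
  Or.symm h

def allocClass {N : Type} (α : Set (N × N)) (v : N) : Set N := {u | u = v ∨ Allocated α v u}

theorem eq_or_allocated_of_allocClass_eq {N : Type} {α : Set (N × N)} {a b : N}
    (h : allocClass α a = allocClass α b) : a = b ∨ Allocated α a b := by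
  have hb : b ∈ allocClass α a := h ▸ Or.inl rfl
  exact hb.imp Eq.symm id

section Arrangement

variable {C : Cirquent A} {α : Set (C.Node × C.Node)}

theorem IsArrangement.eq_or_eq_swap (hα : C.IsArrangement α) {p q : C.Node × C.Node}
    (hp : p ∈ α) (hq : q ∈ α) {v : C.Node} (hvp : v ∈ ({p.1, p.2} : Set C.Node))
    (hvq : v ∈ ({q.1, q.2} : Set C.Node)) : p = q ∨ p = q.swap := by
  rcases hα.2 p hp q hq with h | h | h
  · exact .inl h
  · exact .inr h
  · exact (Set.eq_empty_iff_forall_notMem.mp h v ⟨hvp, hvq⟩).elim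

theorem IsArrangement.eq_of_allocated (hα : C.IsArrangement α) {v u w : C.Node}
    (hu : Allocated α v u) (hw : Allocated α v w) : u = w := by
  rcases hu with hu | hu <;> rcases hw with hw | hw <;>
    rcases hα.eq_or_eq_swap hu hw (v := v) (by simp) (by simp) with h | h <;>
    simp_all [Prod.ext_iff]

theorem IsArrangement.opposite_of_allocated (hα : C.IsArrangement α) {a b : C.Node}
    (h : Allocated α a b) : C.Opposite a b :=
  h.elim (hα.1 _) fun h => Opposite.symm (hα.1 _ h)

theorem IsArrangement.allocClass_eq (hα : C.IsArrangement α) {a b : C.Node}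
    (hab : Allocated α a b) : allocClass α a = allocClass α b := by
  have key : ∀ {a b}, Allocated α a b → allocClass α a ⊆ allocClass α b := by
    rintro a b hab u (rfl | hu)
    · exact .inr hab.symm
    · exact .inl (hα.eq_of_allocated hu hab)
  exact (key hab).antisymm (key hab.symm)

end Arrangement

def separateAtoms (C : Cirquent A) (α : Set (C.Node × C.Node)) : Cirquent (Set C.Node × A) :=
  C.relabel fun v => Prod.mk (allocClass α v)

theorem separateAtoms_rename (C : Cirquent A) (α : Set (C.Node × C.Node)) :
    (C.separateAtoms α).rename Prod.snd = C :=
  C.relabel_rename _ _ fun _ => rfl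

theorem IsArrangement.isCircuit_separateAtoms {C : Cirquent A} {α : Set (C.Node × C.Node)}
    (hα : C.IsArrangement α) : (C.separateAtoms α).IsCircuit := by
  rintro a b ⟨x, ha⟩ - hne hlabel
  obtain ⟨hclass, hlabel⟩ := CLab.eq_of_rename_prodMk_eq ha hlabel
  rcases eq_or_allocated_of_allocClass_eq hclass with rfl | h
  · exact hne rfl
  · exact (hα.opposite_of_allocated h).label_ne hlabel

theorem Validating.separateAtoms {C : Cirquent A} {α : Set (C.Node × C.Node)}
    (h : C.Validating α) : (C.separateAtoms α).Validating α :=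
  h.relabel fun _ hp => congrArg Prod.mk (h.1.allocClass_eq (.inl hp))

end Cirquent

/-- A cirquent is valid if and only if it is an instance of some valid circuit. -/
theorem stmt8 {A : Type} (C : Cirquent A) :
    C.Valid ↔ ∃ (B : Type) (D : Cirquent B) (σ : B → A),
      D.IsCircuit ∧ D.Valid ∧ D.rename σ = C := by
  constructor
  · rintro ⟨α, hα⟩
    exact ⟨_, C.separateAtoms α, Prod.snd, hα.1.isCircuit_separateAtoms, ⟨α, hα.separateAtoms⟩,
      C.separateAtoms_rename α⟩
  · rintro ⟨B, D, σ, -, hD, rfl⟩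
    exact hD.rename σ
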